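/- Let f_{Q2}(θ) = (1/3) · [[16, −8(1+e^{iθ})], [−8(1+e^{−iθ}), 14 + 2cos θ]] ∈ ℂ^{2×2}. Then: (i) det f_{Q2}(θ) = (32/3)(1 − cos θ) for all θ; (ii) f_{Q2}(θ) is Hermitian positive definite for every θ ∈ (0, 2π); (iii) the smallest eigenvalue λ_min(f_{Q2}(θ)) of the Hermitian matrix f_{Q2}(θ) satisfies lim_{θ→0} λ_min(f_{Q2}(θ)) / θ² = 1/2, i.e. λ_min(f_{Q2}(·)) has a zero of order 2 at θ₀ = 0. -/

import Mathlib

/-!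
The trace and determinant of `f_{Q2}(θ)` are `(30 + 2 cos θ)/3 > 0` and `(32/3)(1 - cos θ)`,
so both eigenvalues are positive as soon as `cos θ < 1`. Their product is the determinant, hence
`λ_min = det / λ_max`. Writing `1 - cos θ = (θ²/2) sinc²(θ/2)` gives
`λ_min(θ)/θ² = (16/3) sinc²(θ/2) / λ_max(θ)` for `θ ≠ 0`. The right-hand side is continuous in `θ`
(as `λ_max = (tr + √(tr² - 4 det))/2`) and equals `(16/3)/(32/3) = 1/2` at `θ = 0`.
-/

open Matrix Filter Topology
open scoped ComplexOrder

/-- The symbol of the `ℚ₂` Lagrangian FEM stiffness matrices. -/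
noncomputable def fQ2 (θ : ℝ) : Matrix (Fin 2) (Fin 2) ℂ :=
  (1 / 3 : ℂ) • Matrix.of
    ![![16, -8 * (1 + Complex.exp (Complex.I * θ))],
      ![-8 * (1 + Complex.exp (-(Complex.I) * θ)), 14 + 2 * (Real.cos θ : ℂ)]]

namespace Matrix.IsHermitian

variable {𝕜 : Type*} [RCLike 𝕜] {A : Matrix (Fin 2) (Fin 2) 𝕜}

theorem eigenvalues_add_fin_two (hA : A.IsHermitian) :
    hA.eigenvalues 0 + hA.eigenvalues 1 = RCLike.re A.trace := by
  simp [hA.trace_eq_sum_eigenvalues, Fin.sum_univ_two]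

theorem eigenvalues_mul_fin_two (hA : A.IsHermitian) :
    hA.eigenvalues 0 * hA.eigenvalues 1 = RCLike.re A.det := by
  rw [hA.det_eq_prod_eigenvalues, Fin.prod_univ_two, ← RCLike.ofReal_mul, RCLike.ofReal_re]

end Matrix.IsHermitian

theorem ciInf_fin_two {α : Type*} [ConditionallyCompleteLinearOrder α] (f : Fin 2 → α) :
    ⨅ i, f i = min (f 0) (f 1) := by
  rw [← Finset.inf'_univ_eq_ciInf]
  rfl

theorem Real.max_eq_add_add_sqrt_div_two (a b : ℝ) :
    max a b = (a + b + √((a + b) ^ 2 - 4 * (a * b))) / 2 := by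
  rw [show (a + b) ^ 2 - 4 * (a * b) = (a - b) ^ 2 by ring, Real.sqrt_sq_eq_abs]
  rcases le_total a b with h | h
  · rw [max_eq_right h, abs_of_nonpos (sub_nonpos.2 h)]; ring
  · rw [max_eq_left h, abs_of_nonneg (sub_nonneg.2 h)]; ring

theorem Real.one_sub_cos_eq_mul_sinc_sq (x : ℝ) :
    1 - Real.cos x = x ^ 2 / 2 * Real.sinc (x / 2) ^ 2 := by
  rcases eq_or_ne x 0 with rfl | hx
  · simp
  rw [Real.sinc_of_ne_zero (div_ne_zero hx two_ne_zero), div_pow, Real.sin_sq, Real.cos_sq,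
    show 2 * (x / 2) = x by ring]
  field_simp
  ring

theorem Real.cos_lt_one_of_pos_of_lt_two_pi {x : ℝ} (hx₀ : 0 < x) (hx₂ : x < 2 * Real.pi) :
    Real.cos x < 1 :=
  (Real.cos_le_one x).lt_of_ne fun h =>
    hx₀.ne' ((Real.cos_eq_one_iff_of_lt_of_lt (by linarith [Real.pi_pos]) hx₂).1 h)

noncomputable def fQ2Trace (θ : ℝ) : ℝ := (30 + 2 * Real.cos θ) / 3

noncomputable def fQ2Det (θ : ℝ) : ℝ := 32 / 3 * (1 - Real.cos θ)

noncomputable def fQ2EigenvalueMax (θ : ℝ) : ℝ :=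
  (fQ2Trace θ + √(fQ2Trace θ ^ 2 - 4 * fQ2Det θ)) / 2

theorem fQ2Trace_pos (θ : ℝ) : 0 < fQ2Trace θ := by
  unfold fQ2Trace
  linarith [Real.neg_one_le_cos θ]

theorem fQ2EigenvalueMax_pos (θ : ℝ) : 0 < fQ2EigenvalueMax θ := by
  unfold fQ2EigenvalueMax
  linarith [fQ2Trace_pos θ, Real.sqrt_nonneg (fQ2Trace θ ^ 2 - 4 * fQ2Det θ)]

theorem fQ2EigenvalueMax_zero : fQ2EigenvalueMax 0 = 32 / 3 := by
  norm_num [fQ2EigenvalueMax, fQ2Trace, fQ2Det, Real.sqrt_sq]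

theorem continuous_fQ2EigenvalueMax : Continuous fQ2EigenvalueMax := by
  unfold fQ2EigenvalueMax fQ2Trace fQ2Det
  fun_prop

theorem fQ2_trace (θ : ℝ) : (fQ2 θ).trace = fQ2Trace θ := by
  simp only [fQ2, fQ2Trace, Matrix.trace_fin_two, Matrix.smul_apply, Matrix.of_apply,
    Matrix.cons_val', Matrix.cons_val_zero, Matrix.cons_val_one, Matrix.cons_val_fin_one, smul_eq_mul]
  push_cast
  ring

theorem fQ2_det (θ : ℝ) :
    (fQ2 θ).det = ((32 / 3 : ℝ) : ℂ) * (1 - (Real.cos θ : ℂ)) := by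
  have hmul : Complex.exp (Complex.I * θ) * Complex.exp (-Complex.I * θ) = 1 := by
    rw [← Complex.exp_add, ← add_mul, add_neg_cancel, zero_mul, Complex.exp_zero]
  have hadd : Complex.exp (Complex.I * θ) + Complex.exp (-Complex.I * θ) = 2 * Complex.cos θ := by
    rw [Complex.two_cos, mul_comm _ Complex.I, neg_mul, neg_mul, mul_comm _ Complex.I]
  simp only [fQ2, Matrix.det_fin_two, Matrix.smul_apply, Matrix.of_apply, Matrix.cons_val',
    Matrix.cons_val_zero, Matrix.cons_val_one, Matrix.cons_val_fin_one, smul_eq_mul]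
  push_cast
  linear_combination (-64 / 9 : ℂ) * (hmul + hadd)

section Eigenvalues

variable {θ : ℝ} (hA : (fQ2 θ).IsHermitian)
include hA

theorem fQ2_eigenvalues_add : hA.eigenvalues 0 + hA.eigenvalues 1 = fQ2Trace θ := by
  rw [hA.eigenvalues_add_fin_two, fQ2_trace]
  rfl

theorem fQ2_eigenvalues_mul : hA.eigenvalues 0 * hA.eigenvalues 1 = fQ2Det θ := by
  rw [hA.eigenvalues_mul_fin_two, fQ2_det, fQ2Det]
  simp [Complex.cos_ofReal_re]

theorem fQ2_max_eigenvalues : max (hA.eigenvalues 0) (hA.eigenvalues 1) = fQ2EigenvalueMax θ := by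
  rw [Real.max_eq_add_add_sqrt_div_two, fQ2_eigenvalues_add, fQ2_eigenvalues_mul]
  rfl

theorem fQ2_iInf_eigenvalues : ⨅ i, hA.eigenvalues i = fQ2Det θ / fQ2EigenvalueMax θ := by
  rw [ciInf_fin_two, eq_div_iff (fQ2EigenvalueMax_pos θ).ne', ← fQ2_max_eigenvalues hA,
    min_mul_max, fQ2_eigenvalues_mul]

theorem fQ2_posDef_of_cos_lt_one (hcos : Real.cos θ < 1) : (fQ2 θ).PosDef := by
  have hdet : 0 < hA.eigenvalues 0 * hA.eigenvalues 1 := by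
    rw [fQ2_eigenvalues_mul, fQ2Det]
    linarith
  have hpos : 0 < hA.eigenvalues 0 ∧ 0 < hA.eigenvalues 1 :=
    (pos_and_pos_or_neg_and_neg_of_mul_pos hdet).resolve_right fun hneg => by
      linarith [fQ2_eigenvalues_add hA, fQ2Trace_pos θ]
  rw [hA.posDef_iff_eigenvalues_pos, Fin.forall_fin_two]
  exact hpos

end Eigenvalues

theorem tendsto_fQ2_iInf_eigenvalues_div_sq (hA : ∀ θ : ℝ, (fQ2 θ).IsHermitian) :
    Tendsto (fun θ : ℝ => (⨅ i, (hA θ).eigenvalues i) / θ ^ 2) (𝓝[≠] 0) (𝓝 (1 / 2)) := by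
  have hcont : Continuous fun θ => 16 / 3 * Real.sinc (θ / 2) ^ 2 / fQ2EigenvalueMax θ :=
    .div (.mul continuous_const ((Real.continuous_sinc.comp (continuous_id.div_const 2)).pow 2))
      continuous_fQ2EigenvalueMax fun θ => (fQ2EigenvalueMax_pos θ).ne'
  have hlim := hcont.tendsto' 0 (1 / 2) (by norm_num [fQ2EigenvalueMax_zero])
  refine (hlim.mono_left nhdsWithin_le_nhds).congr' ?_
  filter_upwards [self_mem_nhdsWithin] with θ (hθ : θ ≠ 0)
  rw [fQ2_iInf_eigenvalues, fQ2Det, Real.one_sub_cos_eq_mul_sinc_sq]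
  field_simp
  ring

/-- (i) `det f_{Q2}(θ) = (32/3)(1 - cos θ)`; (ii) `f_{Q2}(θ)` is HPD on `(0,2π)`;
(iii) the minimal eigenvalue of `f_{Q2}(θ)` has a zero of order `2` at `θ₀ = 0`,
with `λ_min(f_{Q2}(θ))/θ² → 1/2`. -/
theorem stmt16 (hherm : ∀ θ : ℝ, (fQ2 θ).IsHermitian) :
    (∀ θ : ℝ, (fQ2 θ).det = ((32 / 3 : ℝ) : ℂ) * (1 - (Real.cos θ : ℂ))) ∧
    (∀ θ : ℝ, 0 < θ → θ < 2 * Real.pi → (fQ2 θ).PosDef) ∧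
    Tendsto (fun θ : ℝ => (⨅ i, (hherm θ).eigenvalues i) / θ ^ 2)
      (𝓝[≠] 0) (𝓝 (1 / 2)) :=
  ⟨fQ2_det, fun θ hθ₀ hθ₂ =>
    fQ2_posDef_of_cos_lt_one (hherm θ) (Real.cos_lt_one_of_pos_of_lt_two_pi hθ₀ hθ₂),
    tendsto_fQ2_iInf_eigenvalues_div_sq hherm⟩
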